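/- Let d ≥ 1, let f : ℝ^d → ℝ^d be a C^1 diffeomorphism, and let K ⊆ ℝ^d be a compact set with f(K) = K whose Lebesgue measure is m(K) = 1. Let σ ∈ K be a fixed point of f. If the statistical basin B(δ_σ) = {x ∈ K : the empirical measures μ_k(x) converge weak-star to δ_σ} has positive Lebesgue measure, then |det Df(σ)| ≤ 1. -/

import Mathlib

open MeasureTheory Filter Topology

/-!
Suppose `|det Df(σ)| > 1`. Since `f` is a diffeomorphism, `φ = log |det Df|` is continuous, so
on the basin of `δ_σ` its Birkhoff averages tend to `φ(σ) > 0`. By the chain rule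
`|det Df^k(x)| = exp (∑_{l<k} φ(f^l x))`, so the Jacobians of the iterates blow up on a set of
positive measure, and by Fatou's lemma so do their integrals over it. But by the change of
variables formula these integrals are bounded by the measure of the invariant compact set `K`.
-/

/-- The Birkhoff average `(1/k) ∑_{l=0}^{k-1} g(f^l(x))`, i.e. the integral of the
observable `g` against the `k`-th empirical measure `μ_k(x) = (1/k) ∑_{l<k} δ_{f^l(x)}`. -/
noncomputable def birkhoffAvg {X : Type*} (f : X → X) (g : X → ℝ) (x : X) (k : ℕ) : ℝ :=
  (∑ l ∈ Finset.range k, g (f^[l] x)) / k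

section BirkhoffAvg

variable {X : Type*} {f : X → X} {g : X → ℝ}

theorem birkhoffAvg_eq_birkhoffSum_div (f : X → X) (g : X → ℝ) (x : X) (k : ℕ) :
    birkhoffAvg f g x k = birkhoffSum f g k x / k :=
  rfl

theorem tendsto_birkhoffSum_atTop_of_tendsto_birkhoffAvg {x : X} {c : ℝ} (hc : 0 < c)
    (h : Tendsto (birkhoffAvg f g x) atTop (𝓝 c)) :
    Tendsto (fun k => birkhoffSum f g k x) atTop atTop := by
  refine (tendsto_natCast_atTop_atTop.atTop_mul_pos hc h).congr' ?_
  filter_upwards [eventually_ne_atTop 0] with k hk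
  rw [birkhoffAvg_eq_birkhoffSum_div, mul_div_cancel₀ _ (Nat.cast_ne_zero.2 hk)]

theorem measurable_birkhoffAvg [MeasurableSpace X] (hf : Measurable f) (hg : Measurable g)
    (k : ℕ) : Measurable fun x => birkhoffAvg f g x k :=
  (Finset.measurable_sum _ fun l _ => hg.comp (hf.iterate l)).div_const _

end BirkhoffAvg

section Determinant

variable {𝕜 E : Type*} [NontriviallyNormedField 𝕜] [NormedAddCommGroup E] [NormedSpace 𝕜 E]
  {f g : E → E}

theorem det_fderiv_comp {x : E} (hg : DifferentiableAt 𝕜 g (f x)) (hf : DifferentiableAt 𝕜 f x) :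
    (fderiv 𝕜 (g ∘ f) x).det = (fderiv 𝕜 g (f x)).det * (fderiv 𝕜 f x).det := by
  rw [fderiv_comp x hg hf]
  simp [ContinuousLinearMap.det]

theorem det_fderiv_ne_zero_of_leftInverse {x : E} (hgf : Function.LeftInverse g f)
    (hg : DifferentiableAt 𝕜 g (f x)) (hf : DifferentiableAt 𝕜 f x) : (fderiv 𝕜 f x).det ≠ 0 := by
  have h := det_fderiv_comp hg hf
  rw [hgf.comp_eq_id, fderiv_id] at h
  simp only [ContinuousLinearMap.det, ContinuousLinearMap.coe_id, LinearMap.det_id] at h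
  exact right_ne_zero_of_mul_eq_one h.symm

theorem det_fderiv_iterate (hf : Differentiable 𝕜 f) (k : ℕ) (x : E) :
    (fderiv 𝕜 f^[k] x).det = ∏ l ∈ Finset.range k, (fderiv 𝕜 f (f^[l] x)).det := by
  induction k with
  | zero => simp [ContinuousLinearMap.det]
  | succ k ih =>
    rw [Function.iterate_succ', det_fderiv_comp (hf _) (hf.iterate k x), ih,
      Finset.prod_range_succ, mul_comm]

end Determinant

section Expansion

variable {E : Type*} [NormedAddCommGroup E] [NormedSpace ℝ E] {f : E → E}

theorem abs_det_fderiv_iterate_eq_exp_birkhoffSum (hf : Differentiable ℝ f)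
    (hdet : ∀ y, (fderiv ℝ f y).det ≠ 0) (k : ℕ) (x : E) :
    |(fderiv ℝ f^[k] x).det| =
      Real.exp (birkhoffSum f (fun y => Real.log |(fderiv ℝ f y).det|) k x) := by
  rw [det_fderiv_iterate hf, Finset.abs_prod, birkhoffSum, Real.exp_sum]
  exact Finset.prod_congr rfl fun l _ => (Real.exp_log (abs_pos.2 (hdet _))).symm

theorem tendsto_abs_det_fderiv_iterate_atTop (hf : Differentiable ℝ f)
    (hdet : ∀ y, (fderiv ℝ f y).det ≠ 0) {x : E} {c : ℝ} (hc : 0 < c)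
    (h : Tendsto (birkhoffAvg f (fun y => Real.log |(fderiv ℝ f y).det|) x) atTop (𝓝 c)) :
    Tendsto (fun k => |(fderiv ℝ f^[k] x).det|) atTop atTop := by
  simp_rw [abs_det_fderiv_iterate_eq_exp_birkhoffSum hf hdet]
  exact Real.tendsto_exp_atTop.comp (tendsto_birkhoffSum_atTop_of_tendsto_birkhoffAvg hc h)

end Expansion

theorem tendsto_setLIntegral_top_of_tendsto_top {α ι : Type*} [MeasurableSpace α]
    {μ : Measure α} {l : Filter ι} [l.IsCountablyGenerated] [l.NeBot] {F : ι → α → ENNReal}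
    {s : Set α} (hs : MeasurableSet s) (hμs : μ s ≠ 0) (hF : ∀ i, Measurable (F i))
    (htop : ∀ x ∈ s, Tendsto (F · x) l (𝓝 ⊤)) :
    Tendsto (fun i => ∫⁻ x in s, F i x ∂μ) l (𝓝 ⊤) := by
  refine tendsto_of_le_liminf_of_limsup_le ?_ le_top
  calc ⊤ = ∫⁻ x in s, liminf (F · x) l ∂μ := by
        rw [setLIntegral_congr_fun hs fun x hx => (htop x hx).liminf_eq, setLIntegral_const,
          ENNReal.top_mul hμs]
    _ ≤ _ := lintegral_liminf_le hF

theorem measure_eq_zero_of_tendsto_abs_det_fderiv_iterate {E : Type*} [NormedAddCommGroup E]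
    [NormedSpace ℝ E] [FiniteDimensional ℝ E] [MeasurableSpace E] [BorelSpace E]
    (μ : Measure E) [μ.IsAddHaarMeasure] {f : E → E} {s K : Set E} (hf : Differentiable ℝ f)
    (hinj : Function.Injective f) (hs : MeasurableSet s) (hsK : s ⊆ K) (hfK : Set.MapsTo f K K)
    (hK : μ K ≠ ⊤) (hexp : ∀ x ∈ s, Tendsto (fun k => |(fderiv ℝ f^[k] x).det|) atTop atTop) :
    μ s = 0 := by
  by_contra hμs
  have hbound (k : ℕ) : ∫⁻ x in s, ENNReal.ofReal |(fderiv ℝ f^[k] x).det| ∂μ ≤ μ K :=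
    (lintegral_abs_det_fderiv_le_addHaar_image μ hs
      (fun x _ => (hf.iterate k x).hasFDerivAt.hasFDerivWithinAt) (hinj.iterate k).injOn).trans
      (measure_mono ((hfK.iterate k).mono_left hsK).image_subset)
  have hmeas (k : ℕ) : Measurable fun x => ENNReal.ofReal |(fderiv ℝ f^[k] x).det| :=
    ENNReal.measurable_ofReal.comp
      (ContinuousLinearMap.continuous_det.measurable.comp (measurable_fderiv ℝ _)).abs
  have hblow := tendsto_setLIntegral_top_of_tendsto_top hs hμs hmeas
    fun x hx => ENNReal.tendsto_ofReal_atTop.comp (hexp x hx)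
  exact hK (top_le_iff.1 (le_of_tendsto' hblow hbound))

theorem abs_det_le_one_of_physical_dirac_general (d : ℕ)
    (f g : EuclideanSpace ℝ (Fin d) → EuclideanSpace ℝ (Fin d))
    (hf : ContDiff ℝ 1 f) (hg : ContDiff ℝ 1 g)
    (hgf : Function.LeftInverse g f)
    (K : Set (EuclideanSpace ℝ (Fin d))) (hK : IsCompact K) (hfK : f '' K = K)
    (σ : EuclideanSpace ℝ (Fin d))
    (hbasin : 0 < volume {x ∈ K | ∀ h : EuclideanSpace ℝ (Fin d) → ℝ, Continuous h →
      Tendsto (birkhoffAvg f h x) atTop (𝓝 (h σ))}) :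
    |(fderiv ℝ f σ).det| ≤ 1 := by
  by_contra! hσ
  have hfd : Differentiable ℝ f := hf.differentiable one_ne_zero
  have hdet (x) : (fderiv ℝ f x).det ≠ 0 :=
    det_fderiv_ne_zero_of_leftInverse hgf (hg.differentiable one_ne_zero _) (hfd x)
  set φ := fun x => Real.log |(fderiv ℝ f x).det|
  have hφ : Continuous φ :=
    (ContinuousLinearMap.continuous_det.comp (hf.continuous_fderiv one_ne_zero)).abs.log
      fun x => abs_ne_zero.2 (hdet x)
  have hs : MeasurableSet {x ∈ K | Tendsto (birkhoffAvg f φ x) atTop (𝓝 (φ σ))} :=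
    hK.measurableSet.inter
      (measurableSet_tendsto _ (measurable_birkhoffAvg hfd.continuous.measurable hφ.measurable))
  have hnull := measure_eq_zero_of_tendsto_abs_det_fderiv_iterate volume hfd hgf.injective hs
    (fun x hx => hx.1) (Set.mapsTo_iff_image_subset.2 hfK.subset) hK.measure_lt_top.ne
    fun x hx => tendsto_abs_det_fderiv_iterate_atTop hfd hdet (Real.log_pos hσ) hx.2
  refine hbasin.ne' (measure_mono_null (fun x hx => ?_) hnull)
  exact ⟨hx.1, hx.2 φ hφ⟩

/-- Let `f` be a `C¹` diffeomorphism of `ℝ^d` with a compact invariant set `K` of Lebesgue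
measure `1`, and let `σ ∈ K` be a fixed point of `f`. If the statistical basin of `δ_σ`,
`B(δ_σ) = {x ∈ K : μ_k(x) → δ_σ weak-star}` (i.e. the Birkhoff averages of every
continuous function `h` converge to `h σ = ∫ h dδ_σ`), has positive Lebesgue measure,
then `|det Df(σ)| ≤ 1`. -/
theorem abs_det_le_one_of_physical_dirac (d : ℕ) (hd : 1 ≤ d)
    (f g : EuclideanSpace ℝ (Fin d) → EuclideanSpace ℝ (Fin d))
    (hf : ContDiff ℝ 1 f) (hg : ContDiff ℝ 1 g)
    (hgf : Function.LeftInverse g f) (hfg : Function.RightInverse g f)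
    (K : Set (EuclideanSpace ℝ (Fin d))) (hK : IsCompact K) (hfK : f '' K = K)
    (hvolK : volume K = 1)
    (σ : EuclideanSpace ℝ (Fin d)) (hσK : σ ∈ K) (hσ : f σ = σ)
    (hbasin : 0 < volume {x ∈ K | ∀ h : EuclideanSpace ℝ (Fin d) → ℝ, Continuous h →
      Tendsto (birkhoffAvg f h x) atTop (𝓝 (h σ))}) :
    |(fderiv ℝ f σ).det| ≤ 1 :=
  abs_det_le_one_of_physical_dirac_general d f g hf hg hgf K hK hfK σ hbasin
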